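/- Let n > 3 be odd and let k be an even integer with 0 ≤ k ≤ (n−1)/2. For every p ∈ [0,1] and all ω⁰, ω¹ ∈ Ω_n, write x for the first coordinate of pω⁰ + (1−p)ω¹ and set S₀ = p⟨Q₀⁰, ω⁰⟩ + (1−p)⟨Q₀¹, ω¹⟩. Then R_n² r_n (r_n² − 1)(1 − cos(kθ_n)) x − 2R_n² r_n² cos(kθ_n) + 2R_n² r_n² ≤ S₀ ≤ R_n² r_n (r_n² − 1)(cos(kθ_n) − 1) x + 2R_n² r_n² cos(kθ_n) + R_n²(1 + r_n⁴). Moreover, the upper (respectively lower) bound is attained whenever the first coordinates of ω⁰ and ω¹ equal r_n and −1/r_n (respectively −1/r_n and r_n). -/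

import Mathlib

noncomputable section

/-- Standard inner product on `ℝ³`. -/
def dot3 (v w : Fin 3 → ℝ) : ℝ := ∑ i, v i * w i

/-- The angle `θ_n = π / n`. -/
def thetaN (n : ℕ) : ℝ := Real.pi / n

/-- `r_n = (cos θ_n)^{-1/2}`. -/
def rN (n : ℕ) : ℝ := Real.sqrt (Real.cos (thetaN n))⁻¹

/-- `R_n = 1 / (1 + r_n²)`. -/
def RN (n : ℕ) : ℝ := 1 / (1 + rN n ^ 2)

/-- The pure states `ω_n(i)` of the regular polygon theory. -/
def omegaN (n i : ℕ) : Fin 3 → ℝ :=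
  ![rN n * Real.cos (2 * (i : ℝ) * thetaN n), rN n * Real.sin (2 * (i : ℝ) * thetaN n), 1]

/-- The state space `Ω_n`, the convex hull of the pure states. -/
def OmegaN (n : ℕ) : Set (Fin 3 → ℝ) :=
  convexHull ℝ {v | ∃ i < n, v = omegaN n i}

/-- The unit effect `u = (0,0,1)`. -/
def uEff : Fin 3 → ℝ := ![0, 0, 1]

/-- The pure effects `e_n(i)` (separate formulas for even and odd `n`). -/
def eN (n i : ℕ) : Fin 3 → ℝ :=
  if Even n then
    (1 / 2 : ℝ) • ![rN n * Real.cos ((2 * (i : ℝ) + 1) * thetaN n),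
                    rN n * Real.sin ((2 * (i : ℝ) + 1) * thetaN n), 1]
  else
    RN n • ![rN n * Real.cos (2 * (i : ℝ) * thetaN n),
             rN n * Real.sin (2 * (i : ℝ) * thetaN n), 1]

/-- The complementary effect `ē_n(i) = u - e_n(i)`. -/
def eBarN (n i : ℕ) : Fin 3 → ℝ := uEff - eN n i

/-- The effect space `E_n`. -/
def EffN (n : ℕ) : Set (Fin 3 → ℝ) :=
  {f | ∀ ω ∈ OmegaN n, dot3 f ω ∈ Set.Icc (0 : ℝ) 1}

/-- The positive cone `V_{n+}` generated by the state space. -/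
def VposN (n : ℕ) : Set (Fin 3 → ℝ) :=
  {x | ∃ c : ℝ, 0 ≤ c ∧ ∃ ω ∈ OmegaN n, x = c • ω}

/-- The dual cone `V*_{n+}` generated by the effect space. -/
def VdualN (n : ℕ) : Set (Fin 3 → ℝ) :=
  {x | ∃ c : ℝ, 0 ≤ c ∧ ∃ f ∈ EffN n, x = c • f}

/-- A state of `Ω_n ⊗_max Ω_n`, identified with a normalized cone-preserving linear map. -/
def IsState (n : ℕ) (η : (Fin 3 → ℝ) →ₗ[ℝ] (Fin 3 → ℝ)) : Prop :=
  (∀ x ∈ VdualN n, η x ∈ VposN n) ∧ dot3 uEff (η uEff) = 1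

/-- A binary observable on `Ω_n`: a pair of effects summing to the unit effect. -/
def IsObservable (n : ℕ) (A : (Fin 3 → ℝ) × (Fin 3 → ℝ)) : Prop :=
  A.1 ∈ EffN n ∧ A.2 ∈ EffN n ∧ A.1 + A.2 = uEff

/-- The observable `E_n(i) = (e_n(i), ē_n(i))`. -/
def EObs (n i : ℕ) : (Fin 3 → ℝ) × (Fin 3 → ℝ) := (eN n i, eBarN n i)

/-- The correlator `E(st) = Σ_{a,b} (-1)^{a+b} ⟨B^b, η(A^a)⟩`. -/
def corr (η : (Fin 3 → ℝ) →ₗ[ℝ] (Fin 3 → ℝ)) (A B : (Fin 3 → ℝ) × (Fin 3 → ℝ)) : ℝ :=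
  dot3 B.1 (η A.1) - dot3 B.2 (η A.1) - dot3 B.1 (η A.2) + dot3 B.2 (η A.2)

/-- The CHSH value `C[η; A₀,A₁; B₀,B₁] = E(00) + E(01) + E(10) - E(11)`. -/
def CHSH (η : (Fin 3 → ℝ) →ₗ[ℝ] (Fin 3 → ℝ))
    (A0 A1 B0 B1 : (Fin 3 → ℝ) × (Fin 3 → ℝ)) : ℝ :=
  corr η A0 B0 + corr η A0 B1 + corr η A1 B0 - corr η A1 B1

/-- `GL(Ω_n)`: linear bijections of `ℝ³` preserving the state space. -/
def GLOmega (n : ℕ) : Set ((Fin 3 → ℝ) →ₗ[ℝ] (Fin 3 → ℝ)) :=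
  {T | Function.Bijective T ∧ T '' OmegaN n = OmegaN n}

/-- The order isomorphism `T_n`: a rotation by `θ_n` for even `n`, the identity for odd `n`. -/
def TN (n : ℕ) : (Fin 3 → ℝ) →ₗ[ℝ] (Fin 3 → ℝ) :=
  if Even n then
    Matrix.toLin' !![Real.cos (thetaN n), Real.sin (thetaN n), 0;
                     -Real.sin (thetaN n), Real.cos (thetaN n), 0;
                     0, 0, 1]
  else LinearMap.id

/-- Maximally entangled states: elements of `T_n · GL(Ω_n)`. -/
def MaxEnt (n : ℕ) (η : (Fin 3 → ℝ) →ₗ[ℝ] (Fin 3 → ℝ)) : Prop :=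
  ∃ T ∈ GLOmega n, η = (TN n).comp T

/-- The effect `Q₀⁰ = (R_n r_n cos(kθ_n), 0, R_n)` (rotated coordinates). -/
def Q00 (n k : ℕ) : Fin 3 → ℝ :=
  ![RN n * rN n * Real.cos ((k : ℝ) * thetaN n), 0, RN n]

/-- The effect `Q₀¹ = (−R_n r_n cos(kθ_n), 0, 1 − R_n)` (rotated coordinates). -/
def Q01 (n k : ℕ) : Fin 3 → ℝ :=
  ![-(RN n * rN n * Real.cos ((k : ℝ) * thetaN n)), 0, 1 - RN n]


/-!
Every state of `Ω_n` has third coordinate `1` and first coordinate in `[-1/r_n, r_n]`. With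
`a, b` the first coordinates of `ω⁰, ω¹` and `c = cos (k θ_n)`, both `upper - S₀` and
`S₀ - lower` are `R_n²` times combinations of `p (r_n - a)`, `(1 - p) (b r_n + 1)` (resp.
`p (a r_n + 1)`, `(1 - p) (r_n - b)`) with coefficients `r_n (2c + r_n² - 1)` and
`2 r_n² c - r_n² + 1`. The second coefficient is nonnegative because `2k + 1 ≤ n` gives
`1 - cos θ_n ≤ 2 cos (k θ_n)`; the equality cases are exactly where the factors vanish.
-/

open Real Set

lemma neg_cos_le_cos_of_add_le_pi {x θ : ℝ} (hx : 0 ≤ x) (hθ : 0 ≤ θ) (h : x + θ ≤ π) :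
    -cos θ ≤ cos x := by
  rw [← cos_pi_sub]
  exact cos_le_cos_of_nonneg_of_le_pi hx (by linarith) (by linarith)

lemma one_sub_cos_le_two_mul_cos {x θ : ℝ} (hx : 0 ≤ x) (hθ : 0 ≤ θ) (h : 2 * x + θ ≤ π) :
    1 - cos θ ≤ 2 * cos x := by
  have hsin : sin (θ / 2) ≤ cos x := by
    rw [← cos_pi_div_two_sub]
    exact cos_le_cos_of_nonneg_of_le_pi hx (by linarith) (by linarith)
  have hsin_nonneg : 0 ≤ sin (θ / 2) := sin_nonneg_of_nonneg_of_le_pi (by linarith) (by linarith)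
  have hsq : sin (θ / 2) ^ 2 = 1 / 2 - cos θ / 2 := by
    rw [sin_sq_eq_half_sub, mul_div_cancel₀ θ two_ne_zero]
  nlinarith [sin_le_one (θ / 2)]

section Polygon

variable {n : ℕ}

lemma natCast_mul_thetaN_le_pi {m : ℕ} (h : m ≤ n) : (m : ℝ) * thetaN n ≤ π := by
  rcases Nat.eq_zero_or_pos n with rfl | hn
  · simp [thetaN, pi_nonneg]
  rw [thetaN, mul_div_left_comm]
  exact mul_le_of_le_one_right pi_nonneg
    (div_le_one_of_le₀ (by exact_mod_cast h) (Nat.cast_nonneg n))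

lemma thetaN_nonneg : 0 ≤ thetaN n := div_nonneg pi_nonneg (Nat.cast_nonneg n)

lemma cos_thetaN_pos (hn : 2 < n) : 0 < cos (thetaN n) := by
  have hlt : thetaN n < π / 2 :=
    (div_lt_div_iff_of_pos_left pi_pos (by positivity) two_pos).2 (by exact_mod_cast hn)
  exact cos_pos_of_mem_Ioo ⟨by linarith [thetaN_nonneg (n := n), pi_pos], hlt⟩

lemma rN_sq (hn : 2 < n) : rN n ^ 2 = (cos (thetaN n))⁻¹ :=
  sq_sqrt (inv_nonneg.2 (cos_thetaN_pos hn).le)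

lemma one_le_rN (hn : 2 < n) : 1 ≤ rN n :=
  one_le_sqrt.2 ((one_le_inv₀ (cos_thetaN_pos hn)).2 (cos_le_one _))

lemma rN_sq_sub_one_le {k : ℕ} (hn : 2 < n) (hk : 2 * k + 1 ≤ n) :
    rN n ^ 2 - 1 ≤ 2 * rN n ^ 2 * cos (k * thetaN n) := by
  have hkθ : 2 * (k * thetaN n) + thetaN n ≤ π := by
    have := natCast_mul_thetaN_le_pi hk
    push_cast at this
    linarith
  have hcos := one_sub_cos_le_two_mul_cos (by positivity [thetaN_nonneg (n := n)])
    thetaN_nonneg hkθ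
  have hr : rN n ^ 2 * cos (thetaN n) = 1 := by
    rw [rN_sq hn, inv_mul_cancel₀ (cos_thetaN_pos hn).ne']
  nlinarith [mul_le_mul_of_nonneg_left hcos (sq_nonneg (rN n))]

/-- For odd `n` no vertex `2 i θ_n` lies within `θ_n` of `π`. -/
lemma neg_cos_thetaN_le_cos (hodd : Odd n) {i : ℕ} (hi : i < n) :
    -cos (thetaN n) ≤ cos (2 * i * thetaN n) := by
  have hlow : ∀ j : ℕ, 2 * j + 1 ≤ n → -cos (thetaN n) ≤ cos (2 * j * thetaN n) := by
    intro j hj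
    have := natCast_mul_thetaN_le_pi hj
    push_cast at this
    exact neg_cos_le_cos_of_add_le_pi (by positivity [thetaN_nonneg (n := n)]) thetaN_nonneg
      (by linarith)
  obtain ⟨m, rfl⟩ := hodd
  rcases Nat.lt_or_ge i (m + 1) with hsmall | hlarge
  · exact hlow i (by omega)
  · have hπ : ((2 * m + 1 : ℕ) : ℝ) * thetaN (2 * m + 1) = π :=
      mul_div_cancel₀ π (by positivity)
    have hreflect : 2 * (i : ℝ) * thetaN (2 * m + 1)
        = 2 * π - 2 * ((2 * m + 1 - i : ℕ) : ℝ) * thetaN (2 * m + 1) := by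
      rw [← hπ, Nat.cast_sub hi.le]
      ring
    rw [hreflect, cos_two_pi_sub]
    exact hlow _ (by omega)

lemma omegaN_zero_mem_Icc (hodd : Odd n) (hn : 2 < n) {i : ℕ} (hi : i < n) :
    omegaN n i 0 ∈ Icc (-(1 / rN n)) (rN n) := by
  have hr : 0 < rN n := zero_lt_one.trans_le (one_le_rN hn)
  have hcos : rN n * cos (thetaN n) = 1 / rN n := by
    rw [← inv_inv (cos (thetaN n)), ← rN_sq hn]
    field_simp
  simp only [omegaN, Matrix.cons_val_zero]
  constructor
  · rw [← hcos, ← mul_neg]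
    exact mul_le_mul_of_nonneg_left (neg_cos_thetaN_le_cos hodd hi) hr.le
  · exact mul_le_of_le_one_right hr.le (cos_le_one _)

lemma OmegaN_subset_coord_bounds (hodd : Odd n) (hn : 2 < n) :
    OmegaN n ⊆ {w | w 2 = 1 ∧ w 0 ∈ Icc (-(1 / rN n)) (rN n)} := by
  refine convexHull_min ?_ (((convex_singleton 1).linear_preimage (LinearMap.proj 2)).inter
    ((convex_Icc _ _).linear_preimage (LinearMap.proj 0)))
  rintro _ ⟨i, hi, rfl⟩
  exact ⟨by simp [omegaN], omegaN_zero_mem_Icc hodd hn hi⟩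

end Polygon

section Bounds

variable {r c R p a b : ℝ}

lemma upper_sub_S0_eq (hR : R = 1 / (1 + r ^ 2)) :
    R ^ 2 * r * (r ^ 2 - 1) * (c - 1) * (p * a + (1 - p) * b) + 2 * R ^ 2 * r ^ 2 * c
        + R ^ 2 * (1 + r ^ 4) - (p * (R * r * c * a + R) + (1 - p) * (-(R * r * c) * b + (1 - R)))
      = R ^ 2 * (r * (2 * c + r ^ 2 - 1) * (p * (r - a))
          + (2 * r ^ 2 * c - r ^ 2 + 1) * ((1 - p) * (b * r + 1))) := by
  subst hR
  field_simp
  ring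

lemma S0_sub_lower_eq (hR : R = 1 / (1 + r ^ 2)) :
    p * (R * r * c * a + R) + (1 - p) * (-(R * r * c) * b + (1 - R))
        - (R ^ 2 * r * (r ^ 2 - 1) * (1 - c) * (p * a + (1 - p) * b) - 2 * R ^ 2 * r ^ 2 * c
          + 2 * R ^ 2 * r ^ 2)
      = R ^ 2 * ((2 * r ^ 2 * c - r ^ 2 + 1) * (p * (a * r + 1))
          + r * (2 * c + r ^ 2 - 1) * ((1 - p) * (r - b))) := by
  subst hR
  field_simp
  ring

lemma S0_scalar_bounds (hR : R = 1 / (1 + r ^ 2)) (hr : 1 ≤ r)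
    (hc : r ^ 2 - 1 ≤ 2 * r ^ 2 * c) (hp : p ∈ Icc (0 : ℝ) 1)
    (ha : a ∈ Icc (-(1 / r)) r) (hb : b ∈ Icc (-(1 / r)) r) :
    (R ^ 2 * r * (r ^ 2 - 1) * (1 - c) * (p * a + (1 - p) * b)
        - 2 * R ^ 2 * r ^ 2 * c + 2 * R ^ 2 * r ^ 2
      ≤ p * (R * r * c * a + R) + (1 - p) * (-(R * r * c) * b + (1 - R))) ∧
    (p * (R * r * c * a + R) + (1 - p) * (-(R * r * c) * b + (1 - R))
      ≤ R ^ 2 * r * (r ^ 2 - 1) * (c - 1) * (p * a + (1 - p) * b)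
        + 2 * R ^ 2 * r ^ 2 * c + R ^ 2 * (1 + r ^ 4)) ∧
    (a = r ∧ b = -(1 / r) →
      p * (R * r * c * a + R) + (1 - p) * (-(R * r * c) * b + (1 - R))
        = R ^ 2 * r * (r ^ 2 - 1) * (c - 1) * (p * a + (1 - p) * b)
          + 2 * R ^ 2 * r ^ 2 * c + R ^ 2 * (1 + r ^ 4)) ∧
    (a = -(1 / r) ∧ b = r →
      p * (R * r * c * a + R) + (1 - p) * (-(R * r * c) * b + (1 - R))
        = R ^ 2 * r * (r ^ 2 - 1) * (1 - c) * (p * a + (1 - p) * b)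
          - 2 * R ^ 2 * r ^ 2 * c + 2 * R ^ 2 * r ^ 2) := by
  have hr0 : 0 < r := zero_lt_one.trans_le hr
  have hc0 : 0 ≤ c := by nlinarith [pow_pos hr0 2]
  have hA : 0 ≤ r * (2 * c + r ^ 2 - 1) := mul_nonneg hr0.le (by nlinarith)
  have hB : 0 ≤ 2 * r ^ 2 * c - r ^ 2 + 1 := by linarith
  have hinv : ∀ x : ℝ, -(1 / r) ≤ x → 0 ≤ x * r + 1 := fun x hx => by
    have := mul_le_mul_of_nonneg_right hx hr0.le
    rw [neg_mul, one_div, inv_mul_cancel₀ hr0.ne'] at this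
    linarith
  have hinv_eq : -(1 / r) * r + 1 = 0 := by field_simp; ring
  refine ⟨sub_nonneg.1 ?_, sub_nonneg.1 ?_, ?_, ?_⟩
  · rw [S0_sub_lower_eq hR]
    exact mul_nonneg (sq_nonneg R) (add_nonneg
      (mul_nonneg hB (mul_nonneg hp.1 (hinv a ha.1)))
      (mul_nonneg hA (mul_nonneg (sub_nonneg.2 hp.2) (sub_nonneg.2 hb.2))))
  · rw [upper_sub_S0_eq hR]
    exact mul_nonneg (sq_nonneg R) (add_nonneg
      (mul_nonneg hA (mul_nonneg hp.1 (sub_nonneg.2 ha.2)))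
      (mul_nonneg hB (mul_nonneg (sub_nonneg.2 hp.2) (hinv b hb.1))))
  · rintro ⟨rfl, rfl⟩
    refine (sub_eq_zero.1 ?_).symm
    rw [upper_sub_S0_eq hR, hinv_eq]
    ring
  · rintro ⟨rfl, rfl⟩
    refine sub_eq_zero.1 ?_
    rw [S0_sub_lower_eq hR, hinv_eq]
    ring

end Bounds

theorem S0_bounds_general (n : ℕ) (hodd : Odd n) (hn : 3 < n)
    (k : ℕ) (hk : k ≤ (n - 1) / 2)
    (p : ℝ) (hp : p ∈ Set.Icc (0 : ℝ) 1)
    (w0 w1 : Fin 3 → ℝ) (hw0 : w0 ∈ OmegaN n) (hw1 : w1 ∈ OmegaN n) :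
    (RN n ^ 2 * rN n * (rN n ^ 2 - 1) * (1 - Real.cos ((k : ℝ) * thetaN n))
          * ((p • w0 + (1 - p) • w1) 0)
        - 2 * RN n ^ 2 * rN n ^ 2 * Real.cos ((k : ℝ) * thetaN n)
        + 2 * RN n ^ 2 * rN n ^ 2
      ≤ p * dot3 (Q00 n k) w0 + (1 - p) * dot3 (Q01 n k) w1) ∧
    (p * dot3 (Q00 n k) w0 + (1 - p) * dot3 (Q01 n k) w1
      ≤ RN n ^ 2 * rN n * (rN n ^ 2 - 1) * (Real.cos ((k : ℝ) * thetaN n) - 1)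
          * ((p • w0 + (1 - p) • w1) 0)
        + 2 * RN n ^ 2 * rN n ^ 2 * Real.cos ((k : ℝ) * thetaN n)
        + RN n ^ 2 * (1 + rN n ^ 4)) ∧
    (w0 0 = rN n ∧ w1 0 = -(1 / rN n) →
      p * dot3 (Q00 n k) w0 + (1 - p) * dot3 (Q01 n k) w1
        = RN n ^ 2 * rN n * (rN n ^ 2 - 1) * (Real.cos ((k : ℝ) * thetaN n) - 1)
            * ((p • w0 + (1 - p) • w1) 0)
          + 2 * RN n ^ 2 * rN n ^ 2 * Real.cos ((k : ℝ) * thetaN n)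
          + RN n ^ 2 * (1 + rN n ^ 4)) ∧
    (w0 0 = -(1 / rN n) ∧ w1 0 = rN n →
      p * dot3 (Q00 n k) w0 + (1 - p) * dot3 (Q01 n k) w1
        = RN n ^ 2 * rN n * (rN n ^ 2 - 1) * (1 - Real.cos ((k : ℝ) * thetaN n))
            * ((p • w0 + (1 - p) • w1) 0)
          - 2 * RN n ^ 2 * rN n ^ 2 * Real.cos ((k : ℝ) * thetaN n)
          + 2 * RN n ^ 2 * rN n ^ 2) := by
  obtain ⟨hw0_two, hw0_zero⟩ := OmegaN_subset_coord_bounds hodd (by omega) hw0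
  obtain ⟨hw1_two, hw1_zero⟩ := OmegaN_subset_coord_bounds hodd (by omega) hw1
  have key := S0_scalar_bounds (c := cos (k * thetaN n)) (RN.eq_1 n) (one_le_rN (by omega))
    (rN_sq_sub_one_le (by omega) (by omega)) hp hw0_zero hw1_zero
  simp only [dot3, Q00, Q01, Fin.sum_univ_three, Matrix.cons_val_zero, Matrix.cons_val_one,
    Matrix.cons_val_two, Matrix.tail_cons, Matrix.head_cons, Pi.add_apply, Pi.smul_apply,
    smul_eq_mul, hw0_two, hw1_two, zero_mul, add_zero, mul_one]
  exact key

/-- bounds for `S₀ = p⟨Q₀⁰, ω⁰⟩ + (1−p)⟨Q₀¹, ω¹⟩` in terms of the first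
coordinate `x` of `pω⁰ + (1−p)ω¹`, with attainment when the first coordinates of
`ω⁰, ω¹` are `r_n, −1/r_n` (upper bound) resp. `−1/r_n, r_n` (lower bound). -/
theorem S0_bounds (n : ℕ) (hodd : Odd n) (hn : 3 < n)
    (k : ℕ) (hke : Even k) (hk : k ≤ (n - 1) / 2)
    (p : ℝ) (hp : p ∈ Set.Icc (0 : ℝ) 1)
    (w0 w1 : Fin 3 → ℝ) (hw0 : w0 ∈ OmegaN n) (hw1 : w1 ∈ OmegaN n) :
    (RN n ^ 2 * rN n * (rN n ^ 2 - 1) * (1 - Real.cos ((k : ℝ) * thetaN n))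
          * ((p • w0 + (1 - p) • w1) 0)
        - 2 * RN n ^ 2 * rN n ^ 2 * Real.cos ((k : ℝ) * thetaN n)
        + 2 * RN n ^ 2 * rN n ^ 2
      ≤ p * dot3 (Q00 n k) w0 + (1 - p) * dot3 (Q01 n k) w1) ∧
    (p * dot3 (Q00 n k) w0 + (1 - p) * dot3 (Q01 n k) w1
      ≤ RN n ^ 2 * rN n * (rN n ^ 2 - 1) * (Real.cos ((k : ℝ) * thetaN n) - 1)
          * ((p • w0 + (1 - p) • w1) 0)
        + 2 * RN n ^ 2 * rN n ^ 2 * Real.cos ((k : ℝ) * thetaN n)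
        + RN n ^ 2 * (1 + rN n ^ 4)) ∧
    (w0 0 = rN n ∧ w1 0 = -(1 / rN n) →
      p * dot3 (Q00 n k) w0 + (1 - p) * dot3 (Q01 n k) w1
        = RN n ^ 2 * rN n * (rN n ^ 2 - 1) * (Real.cos ((k : ℝ) * thetaN n) - 1)
            * ((p • w0 + (1 - p) • w1) 0)
          + 2 * RN n ^ 2 * rN n ^ 2 * Real.cos ((k : ℝ) * thetaN n)
          + RN n ^ 2 * (1 + rN n ^ 4)) ∧
    (w0 0 = -(1 / rN n) ∧ w1 0 = rN n →
      p * dot3 (Q00 n k) w0 + (1 - p) * dot3 (Q01 n k) w1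
        = RN n ^ 2 * rN n * (rN n ^ 2 - 1) * (1 - Real.cos ((k : ℝ) * thetaN n))
            * ((p • w0 + (1 - p) • w1) 0)
          - 2 * RN n ^ 2 * rN n ^ 2 * Real.cos ((k : ℝ) * thetaN n)
          + 2 * RN n ^ 2 * rN n ^ 2) :=
  S0_bounds_general n hodd hn k hk p hp w0 w1 hw0 hw1
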